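/- arXiv:1810.03485 — 8 statements merged into one kernel-verified Lean document; each statement's English description precedes it below -/
import Mathlib

section
/- For every odd integer n > 3, there exists a subspace U of F_2^n of codimension 2 such that the union of the cyclic shifts of U equals F_2^n. (Explicitly, the span of {11...1, 1010...0, 000110...0, 0000110...0, ..., 0...011} is such a subspace.) -/
/-!
Let `s = ∑ i, x i` and `c = s + 1`. Over `𝔽₂` the indicator of `x j = s` is `x j + c`, and
`∑ j, (x j + c) * (x (j - 1) + x (j + 1)) = 2 ∑ j, x j x (j + 1) + 2 c s = 0`, while
`∑ j, (x j + c) = s + n c = 1` for odd `n`. Hence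
`∑ j, (x j + c) * (x (j - 1) + x (j + 1) + 1) = 1`, so some `j` has `x j = s` and
`x (j - 1) = x (j + 1)`. Shifting `x` by `j - 1` lands it in
`U = {y | y 0 = y 2 ∧ y 1 = ∑ i, y i}`, which has codimension 2 once `0, 1, 2, 3` are distinct.
-/

open Polynomial Module

/-- The cyclic shift operator on `Fin n → F`. -/
def cycShift (F : Type*) (n : ℕ) : (Fin n → F) → (Fin n → F) :=
  fun x i => x ⟨(i.1 + 1) % n, Nat.mod_lt _ (lt_of_le_of_lt (Nat.zero_le _) i.2)⟩

/-- A subspace `U ≤ F^n` is cyclically covering if the union of its cyclic shifts is `F^n`. -/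
def IsCycCovering (F : Type*) [Field F] (n : ℕ) (U : Submodule F (Fin n → F)) : Prop :=
  ∀ x : Fin n → F, ∃ r : ℕ, (cycShift F n)^[r] x ∈ U

/-- `hq F n` : the maximum codimension of a cyclically covering subspace of `F^n`. -/
noncomputable def hq (F : Type*) [Field F] [Fintype F] (n : ℕ) : ℕ :=
  sSup {k | ∃ U : Submodule F (Fin n → F), IsCycCovering F n U ∧
    Module.finrank F (Fin n → F) - Module.finrank F U = k}

section OddGroup

variable {G : Type*} [AddCommGroup G] [Fintype G]

theorem sum_indicator_mul_eq_one (hG : Odd (Fintype.card G)) (g : G) (x : G → ZMod 2) :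
    ∑ j, (x j + ∑ i, x i + 1) * (x (j - g) + x (j + g) + 1) = 1 := by
  set s := ∑ i, x i
  have h_sub : ∑ j, x (j - g) = s := Equiv.sum_comp (Equiv.subRight g) x
  have h_add : ∑ j, x (j + g) = s := Equiv.sum_comp (Equiv.addRight g) x
  have h_pair : ∑ j, x j * x (j - g) = ∑ j, x (j + g) * x j := by
    simpa using (Equiv.sum_comp (Equiv.addRight g) fun j => x j * x (j - g)).symm
  have h_card : (Fintype.card G : ZMod 2) = 1 := ZMod.natCast_eq_one_iff_odd.2 hG
  calc ∑ j, (x j + s + 1) * (x (j - g) + x (j + g) + 1)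
      = ∑ j, (x j * x (j - g) + x (j + g) * x j + (s + 1) * (x (j - g) + x (j + g)) + x j
          + (s + 1)) := Finset.sum_congr rfl fun j _ => by ring
    _ = 2 * ∑ j, x j * x (j - g) + (s + 1) * (2 * s) + s
          + (Fintype.card G : ZMod 2) * (s + 1) := by
        simp only [Finset.sum_add_distrib, ← Finset.mul_sum, h_sub, h_add, h_pair,
          Finset.sum_const, Finset.card_univ, nsmul_eq_mul]
        ring
    _ = 1 := by
        rw [h_card]
        ring_nf
        reduce_mod_char

theorem exists_eq_sum_and_sub_eq_add (hG : Odd (Fintype.card G)) (g : G) (x : G → ZMod 2) :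
    ∃ j, x j = ∑ i, x i ∧ x (j - g) = x (j + g) := by
  obtain ⟨j, -, hj⟩ :=
    Finset.exists_ne_zero_of_sum_ne_zero ((sum_indicator_mul_eq_one hG g x).symm ▸ one_ne_zero)
  have h_factors : ∀ a b c d : ZMod 2, (a + b + 1) * (c + d + 1) ≠ 0 → a = b ∧ c = d := by
    decide
  exact ⟨j, h_factors _ _ _ _ hj⟩

end OddGroup

open Fin.NatCast Fin.CommRing

theorem cycShift_apply {F : Type*} {n : ℕ} [NeZero n] (x : Fin n → F) (i : Fin n) :
    cycShift F n x i = x (i + 1) := by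
  simp only [cycShift]
  congr 1
  ext
  simp [Fin.val_add]

theorem cycShift_iterate_val {F : Type*} {n : ℕ} [NeZero n] (x : Fin n → F) (k : Fin n) :
    (cycShift F n)^[k] x = fun i => x (i + k) := by
  suffices h : ∀ r : ℕ, (cycShift F n)^[r] x = fun i => x (i + r) by
    simpa using h k
  intro r
  induction r with
  | zero => simp
  | succ r ih =>
    ext i
    rw [Function.iterate_succ_apply', cycShift_apply, ih, Nat.cast_succ, ← add_assoc]
    exact congrArg x (add_right_comm i 1 r)

def cycCoverMap (R : Type*) [CommRing R] (n : ℕ) [NeZero n] : (Fin n → R) →ₗ[R] R × R :=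
  let π : Fin n → (Fin n → R) →ₗ[R] R := LinearMap.proj
  (π 0 - π 2).prod (π 1 - ∑ i, π i)

section CycCoverMap

variable {n : ℕ} [NeZero n]

theorem mem_ker_cycCoverMap {R : Type*} [CommRing R] {y : Fin n → R} :
    y ∈ LinearMap.ker (cycCoverMap R n) ↔ y 0 = y 2 ∧ y 1 = ∑ i, y i := by
  simp [cycCoverMap, sub_eq_zero]

theorem cycCoverMap_surjective {R : Type*} [CommRing R] (hn : 3 < n) :
    Function.Surjective (cycCoverMap R n) := by
  rintro ⟨a, b⟩
  refine ⟨Pi.single 0 a - Pi.single 3 (a + b), ?_⟩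
  have : (0 : Fin n) ≠ 1 ∧ (0 : Fin n) ≠ 2 ∧ (3 : Fin n) ≠ 0 ∧ (3 : Fin n) ≠ 1 ∧
      (3 : Fin n) ≠ 2 := by
    simp [Fin.ext_iff, Nat.mod_eq_of_lt (show 1 < n by omega),
      Nat.mod_eq_of_lt (show 2 < n by omega), Nat.mod_eq_of_lt hn]
  simp [cycCoverMap, Pi.single_apply, this]

theorem isCycCovering_ker_cycCoverMap (hodd : Odd n) :
    IsCycCovering (ZMod 2) n (LinearMap.ker (cycCoverMap (ZMod 2) n)) := by
  intro x
  obtain ⟨j, h_mid, h_ends⟩ :=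
    exists_eq_sum_and_sub_eq_add (by rwa [Fintype.card_fin]) (1 : Fin n) x
  refine ⟨(j - 1 : Fin n), ?_⟩
  have h_sum : ∑ i, x (i + (j - 1)) = ∑ i, x i := Equiv.sum_comp (Equiv.addRight (j - 1)) x
  rw [cycShift_iterate_val, mem_ker_cycCoverMap, h_sum, zero_add, h_ends, ← h_mid]
  constructor <;> congr 1 <;> ring

end CycCoverMap

theorem finrank_sub_finrank_ker_of_surjective {K V W : Type*} [DivisionRing K] [AddCommGroup V]
    [Module K V] [AddCommGroup W] [Module K W] [FiniteDimensional K V] {f : V →ₗ[K] W}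
    (hf : Function.Surjective f) : finrank K V - finrank K (LinearMap.ker f) = finrank K W := by
  have h := LinearMap.finrank_range_add_finrank_ker f
  rw [LinearMap.range_eq_top.2 hf, finrank_top] at h
  omega

/-- For every odd integer n > 3, there is a cyclically covering subspace of 𝔽₂ⁿ of codimension 2. -/
theorem stmt_0 (n : ℕ) (hn : 3 < n) (hodd : Odd n) :
    ∃ U : Submodule (ZMod 2) (Fin n → ZMod 2), IsCycCovering (ZMod 2) n U ∧
      Module.finrank (ZMod 2) (Fin n → ZMod 2) - Module.finrank (ZMod 2) U = 2 := by
  have : NeZero n := ⟨by omega⟩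
  refine ⟨LinearMap.ker (cycCoverMap (ZMod 2) n), isCycCovering_ker_cycCoverMap hodd, ?_⟩
  rw [finrank_sub_finrank_ker_of_surjective (cycCoverMap_surjective hn)]
  simp
end

section
/- For any prime power q and positive integers n, m, we have h_q(nm) ≥ max{h_q(n), h_q(m)}. -/
open Polynomial Module

section Aux

variable (F : Type*) [Field F]

/-- The block-sum projection `F^{nm} → F^n`. -/
def projMap (n m : ℕ) : (Fin (n * m) → F) →ₗ[F] (Fin n → F) where
  toFun x := fun i => ∑ j : Fin m, x ⟨i.1 + n * j.1, by
    have h1 : i.1 + 1 ≤ n := i.2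
    have h2 : j.1 + 1 ≤ m := j.2
    calc i.1 + n * j.1 < n + n * j.1 := by omega
    _ = n * (j.1 + 1) := by ring
    _ ≤ n * m := Nat.mul_le_mul_left n h2⟩
  map_add' x y := by funext i; simp [Finset.sum_add_distrib]
  map_smul' c x := by funext i; simp [Finset.mul_sum]

lemma projMap_shift (n m : ℕ) (hn : 0 < n) (hm : 0 < m) (x : Fin (n * m) → F) :
    projMap F n m (cycShift F (n * m) x) = cycShift F n (projMap F n m x) := by
  haveI : NeZero m := ⟨hm.ne'⟩
  funext i
  simp only [projMap, cycShift, LinearMap.coe_mk, AddHom.coe_mk]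
  by_cases h : i.1 + 1 < n
  · apply Finset.sum_congr rfl
    intro j _
    congr 1
    apply Fin.ext
    have h2 : j.1 + 1 ≤ m := j.2
    have hlt : i.1 + n * j.1 + 1 < n * m := by
      calc i.1 + n * j.1 + 1 < n + n * j.1 := by omega
      _ = n * (j.1 + 1) := by ring
      _ ≤ n * m := Nat.mul_le_mul_left n h2
    show (i.1 + n * j.1 + 1) % (n * m) = (i.1 + 1) % n + n * j.1
    rw [Nat.mod_eq_of_lt hlt, Nat.mod_eq_of_lt h]
    omega
  · have h1 : i.1 + 1 = n := by have := i.2; omega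
    refine Fintype.sum_equiv (Equiv.addRight (1 : Fin m)) _ _ (fun j => ?_)
    congr 1
    apply Fin.ext
    show (i.1 + n * j.1 + 1) % (n * m) = (i.1 + 1) % n + n * ((j + 1 : Fin m)).1
    have h2 : ((j + 1 : Fin m)).1 = (j.1 + 1) % m := by
      rw [Fin.val_add, Fin.val_one']
      conv_rhs => rw [Nat.add_mod]
      rw [Nat.mod_eq_of_lt j.2]
    have h3 : i.1 + n * j.1 + 1 = n * (j.1 + 1) := by
      have : n * (j.1 + 1) = n * j.1 + n := by ring
      omega
    rw [h2, h3, Nat.mul_mod_mul_left, h1, Nat.mod_self, Nat.zero_add]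

lemma projMap_iterate (n m : ℕ) (hn : 0 < n) (hm : 0 < m) (r : ℕ) (x : Fin (n * m) → F) :
    projMap F n m ((cycShift F (n * m))^[r] x) = (cycShift F n)^[r] (projMap F n m x) := by
  induction r with
  | zero => rfl
  | succ r ih =>
    rw [Function.iterate_succ_apply', Function.iterate_succ_apply',
      projMap_shift F n m hn hm, ih]

lemma projMap_surj (n m : ℕ) (hm : 0 < m) : Function.Surjective (projMap F n m) := by
  intro y
  refine ⟨fun k => if h : k.1 < n then y ⟨k.1, h⟩ else 0, ?_⟩
  funext i
  show (∑ j : Fin m, _) = y i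
  rw [Finset.sum_eq_single (⟨0, hm⟩ : Fin m)]
  · simp [i.2]
  · intro j _ hj
    have hj0 : j.1 ≠ 0 := fun h0 => hj (Fin.ext h0)
    have : ¬ (i.1 + n * j.1 < n) := by
      have : n ≤ n * j.1 := Nat.le_mul_of_pos_right n (Nat.pos_of_ne_zero hj0)
      omega
    simp [this]
  · intro h
    exact absurd (Finset.mem_univ _) h

lemma codim_comap {M N : Type*} [AddCommGroup M] [Module F M] [AddCommGroup N] [Module F N]
    [FiniteDimensional F M] [FiniteDimensional F N]
    (L : M →ₗ[F] N) (hL : Function.Surjective L) (U : Submodule F N) :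
    finrank F M - finrank F (U.comap L) = finrank F N - finrank F U := by
  have hsurj : Function.Surjective (U.mkQ.comp L) := (Submodule.mkQ_surjective U).comp hL
  have e := LinearMap.quotKerEquivOfSurjective _ hsurj
  have hker : LinearMap.ker (U.mkQ.comp L) = U.comap L := by
    rw [LinearMap.ker_comp, Submodule.ker_mkQ]
  rw [hker] at e
  have h1 := Submodule.finrank_quotient_add_finrank (U.comap L)
  have h2 := Submodule.finrank_quotient_add_finrank U
  have h3 : finrank F (M ⧸ U.comap L) = finrank F (N ⧸ U) := e.finrank_eq
  omega

lemma hq_le_mul [Fintype F] (n m : ℕ) (hn : 0 < n) (hm : 0 < m) :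
    hq F n ≤ hq F (n * m) := by
  unfold hq
  apply csSup_le_csSup
  · refine ⟨n * m, fun k hk => ?_⟩
    obtain ⟨U, _, hU⟩ := hk
    have hfr : finrank F (Fin (n * m) → F) = n * m := by simp
    omega
  · exact ⟨0, ⊤, fun x => ⟨0, trivial⟩, by simp⟩
  · rintro k ⟨U, hU, rfl⟩
    refine ⟨U.comap (projMap F n m), ?_, ?_⟩
    · intro x
      obtain ⟨r, hr⟩ := hU (projMap F n m x)
      refine ⟨r, ?_⟩
      rw [Submodule.mem_comap, projMap_iterate F n m hn hm r]
      exact hr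
    · exact codim_comap F (projMap F n m) (projMap_surj F n m hm) U

end Aux

/-- For a prime power q and n, m ≥ 1, h_q(nm) ≥ max(h_q(n), h_q(m)). -/
theorem stmt_1 (F : Type*) [Field F] [Fintype F] (n m : ℕ) (hn : 0 < n) (hm : 0 < m) :
    max (hq F n) (hq F m) ≤ hq F (n * m) := by
  apply max_le
  · exact hq_le_mul F n m hn hm
  · rw [Nat.mul_comm]
    exact hq_le_mul F m n hm hn
end

section
/- Let q be a prime power, n coprime to q, and suppose F_q[X]/⟨X^n−1⟩ = ⊕_{i=1}^N V_i is the decomposition into the subspaces V_i corresponding (via the Chinese Remainder Theorem) to the distinct monic irreducible factors f_i(X) of X^n−1. If U ≤ V_1 is a subspace whose orbit under multiplication by powers of X covers V_1, then U' = U ⊕ (⊕_{i≥2} V_i) is a cyclically covering subspace of F_q[X]/⟨X^n−1⟩, and codim(U') = codim of U in V_1. -/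
open Polynomial Module Function

/-!
The `f i` are pairwise coprime with product `X ^ n - 1`, so in `F[X] ⧸ ⟨X ^ n - 1⟩` the ideals
`V₁ = ⟨∏_{j ≠ 1} f j⟩` and `W = ⨆_{i ≥ 2} V i` are complementary: they span everything by a
Bézout identity `∑ μ i * ∏_{j ≠ i} f j = 1`, and `W ⊆ ⟨f₁⟩` meets `V₁` trivially since `f₁` is
coprime to `∏_{j ≠ 1} f j` while their product vanishes. Writing `x = v + w` with `v ∈ V₁` and
`w ∈ W`, some `X ^ r` moves `v` into `U` and keeps `w` in the ideal `W`. Complementarity also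
gives `dim (U ⊔ W) = dim U + dim W` and `dim = dim V₁ + dim W`.
-/

theorem Polynomial.pairwise_isCoprime_of_irreducible_of_monic {K ι : Type*} [Field K]
    {f : ι → K[X]} (hirr : ∀ i, Irreducible (f i)) (hmon : ∀ i, (f i).Monic)
    (hinj : Function.Injective f) : Pairwise (IsCoprime on f) := by
  intro i j hij
  refine (hirr i).coprime_iff_not_dvd.mpr fun hdvd => hij (hinj ?_)
  exact eq_of_monic_of_associated (hmon i) (hmon j)
    (associated_of_dvd_dvd hdvd ((hirr i).dvd_symm (hirr j) hdvd))

namespace Ideal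

theorem map_mkₐ_restrictScalars {F R : Type*} [CommSemiring F] [CommRing R] [Algebra F R]
    (I J : Ideal R) :
    Submodule.map (Quotient.mkₐ F I).toLinearMap (J.restrictScalars F) =
      (J.map (Quotient.mk I)).restrictScalars F := by
  ext x
  simp [mem_map_iff_of_surjective _ Quotient.mk_surjective]

theorem disjoint_span_singleton_of_isCoprime_of_mul_eq_zero {A : Type*} [CommSemiring A] {a b : A}
    (hab : IsCoprime a b) (hmul : a * b = 0) :
    Disjoint (span {a}) (span {b}) := by
  rw [disjoint_iff, ← mul_eq_inf_of_isCoprime ((isCoprime_span_singleton_iff a b).mpr hab),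
    span_singleton_mul_span_singleton, hmul, span_singleton_eq_bot.mpr rfl]

section CoprimeFamily

variable {R ι : Type*} [CommRing R] [Fintype ι] [DecidableEq ι] {f : ι → R}

theorem iSup_span_prod_erase_eq_top [Nonempty ι] (hf : Pairwise (IsCoprime on f)) :
    ⨆ i, span {∏ j ∈ Finset.univ.erase i, f j} = ⊤ := by
  obtain ⟨μ, hμ⟩ := exists_sum_eq_one_iff_pairwise_coprime'.mpr hf
  rw [eq_top_iff_one, ← hμ]
  refine sum_mem _ fun i _ => mul_mem_left _ _ (mem_iSup_of_mem i ?_)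
  rw [Finset.compl_singleton]
  exact mem_span_singleton_self _

theorem isCompl_map_span_prod_erase (hf : Pairwise (IsCoprime on f)) {p : R}
    (hp : ∏ i, f i = p) (i₀ : ι) :
    IsCompl ((span {∏ j ∈ Finset.univ.erase i₀, f j}).map (Quotient.mk (span {p})))
      (⨆ i, ⨆ (_ : i ≠ i₀), (span {∏ j ∈ Finset.univ.erase i, f j}).map
        (Quotient.mk (span {p}))) := by
  have : Nonempty ι := ⟨i₀⟩
  set g := fun i => ∏ j ∈ Finset.univ.erase i, f j
  set π := Quotient.mk (span {p})
  have hcop : IsCoprime (π (g i₀)) (π (f i₀)) :=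
    ((IsCoprime.prod_right fun j hj => hf (Finset.ne_of_mem_erase hj).symm).symm).map π
  have hzero : π (g i₀) * π (f i₀) = 0 := by
    rw [← map_mul, mul_comm, Finset.mul_prod_erase _ _ (Finset.mem_univ i₀), hp,
      Quotient.eq_zero_iff_mem]
    exact mem_span_singleton_self p
  have hle : ⨆ i, ⨆ (_ : i ≠ i₀), (span {g i}).map π ≤ span {π (f i₀)} := by
    refine iSup₂_le fun i hi => ?_
    rw [map_span, Set.image_singleton, span_singleton_le_span_singleton]
    exact _root_.map_dvd π
      (Finset.dvd_prod_of_mem f (Finset.mem_erase.mpr ⟨hi.symm, Finset.mem_univ _⟩))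
  constructor
  · rw [map_span, Set.image_singleton]
    exact (disjoint_span_singleton_of_isCoprime_of_mul_eq_zero hcop hzero).mono_right hle
  · rw [codisjoint_iff, ← iSup_split_single (fun i => (span {g i}).map π) i₀, ← map_iSup,
      iSup_span_prod_erase_eq_top hf, map_top]

end CoprimeFamily

end Ideal

theorem exists_pow_mul_mem_sup_restrictScalars {F A : Type*} [CommSemiring F] [CommSemiring A]
    [Algebra F A] (c : A) {U V : Submodule F A} {J : Ideal A}
    (htop : V ⊔ J.restrictScalars F = ⊤) (hcover : ∀ v ∈ V, ∃ r : ℕ, c ^ r * v ∈ U) (x : A) :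
    ∃ r : ℕ, c ^ r * x ∈ U ⊔ J.restrictScalars F := by
  obtain ⟨v, hv, w, hw, rfl⟩ := Submodule.mem_sup.mp (htop ▸ Submodule.mem_top : x ∈ _)
  obtain ⟨r, hr⟩ := hcover v hv
  exact ⟨r, mul_add (c ^ r) v w ▸ Submodule.add_mem_sup hr (J.mul_mem_left (c ^ r) hw)⟩

theorem Submodule.finrank_sub_finrank_sup_of_isCompl {K M : Type*} [DivisionRing K]
    [AddCommGroup M] [Module K M] [FiniteDimensional K M] {U V W : Submodule K M}
    (h : IsCompl V W) (hU : U ≤ V) :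
    finrank K M - finrank K ↥(U ⊔ W) = finrank K V - finrank K U := by
  have hM := Submodule.finrank_add_eq_of_isCompl h
  have hUW := Submodule.finrank_sup_add_finrank_inf_eq U W
  rw [(h.disjoint.mono_left hU).eq_bot, finrank_bot] at hUW
  omega

theorem stmt_7_general (F : Type*) [Field F] (n : ℕ) (N : ℕ) (hN : 0 < N)
    (f : Fin N → F[X]) (hirr : ∀ i, Irreducible (f i)) (hmon : ∀ i, (f i).Monic)
    (hdist : Function.Injective f)
    (hfact : ∏ i, f i = X ^ n - 1)
    (V : Fin N → Submodule F (F[X] ⧸ Ideal.span {(X ^ n - 1 : F[X])}))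
    (hV : ∀ i, V i = Submodule.map
      (Ideal.Quotient.mkₐ F (Ideal.span {(X ^ n - 1 : F[X])})).toLinearMap
      ((Ideal.span {∏ j ∈ Finset.univ.erase i, f j}).restrictScalars F))
    (U : Submodule F (F[X] ⧸ Ideal.span {(X ^ n - 1 : F[X])}))
    (hU : U ≤ V ⟨0, hN⟩)
    (hcover : ∀ x ∈ V ⟨0, hN⟩, ∃ r : ℕ,
      (Ideal.Quotient.mk (Ideal.span {(X ^ n - 1 : F[X])}) X) ^ r * x ∈ U) :
    (∀ x : F[X] ⧸ Ideal.span {(X ^ n - 1 : F[X])}, ∃ r : ℕ,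
      (Ideal.Quotient.mk (Ideal.span {(X ^ n - 1 : F[X])}) X) ^ r * x ∈
        U ⊔ ⨆ i : Fin N, ⨆ (_ : i ≠ ⟨0, hN⟩), V i) ∧
    finrank F (F[X] ⧸ Ideal.span {(X ^ n - 1 : F[X])}) -
      finrank F (U ⊔ ⨆ i : Fin N, ⨆ (_ : i ≠ ⟨0, hN⟩), V i : Submodule F _) =
    finrank F (V ⟨0, hN⟩) - finrank F U := by
  have hcompl := Ideal.isCompl_map_span_prod_erase
    (Polynomial.pairwise_isCoprime_of_irreducible_of_monic hirr hmon hdist) hfact ⟨0, hN⟩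
  have : FiniteDimensional F (F[X] ⧸ Ideal.span {(X ^ n - 1 : F[X])}) :=
    (hfact ▸ monic_prod_of_monic _ _ fun i _ => hmon i : (X ^ n - 1 : F[X]).Monic).finite_quotient
  refine ⟨fun x => ?_, Submodule.finrank_sub_finrank_sup_of_isCompl ?_ hU⟩
  · simp only [hV, Ideal.map_mkₐ_restrictScalars, ← Submodule.restrictScalars_iSup] at hcover ⊢
    exact exists_pow_mul_mem_sup_restrictScalars _
      ((Submodule.codisjoint_restrictScalars_iff F).mpr hcompl.codisjoint).eq_top hcover x
  · simpa only [hV, Ideal.map_mkₐ_restrictScalars, ← Submodule.restrictScalars_iSup,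
      Submodule.isCompl_restrictScalars_iff] using hcompl

/-- Let X^n − 1 = ∏ f_i be the factorization into distinct monic irreducibles over F_q
(gcd(n,q)=1), and let V_i ≤ F_q[X]/⟨X^n−1⟩ be the subspace of classes of polynomials
divisible by ∏_{j≠i} f_j. If U ≤ V_1 has its orbit under multiplication by X covering
V_1, then U' = U ⊔ (⊔_{i≥2} V_i) is cyclically covering and
codim(U') = codim of U in V_1. -/
theorem stmt_7 (F : Type*) [Field F] [Fintype F] (n : ℕ) (hn : 0 < n)
    (hcop : Nat.Coprime n (Fintype.card F)) (N : ℕ) (hN : 0 < N)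
    (f : Fin N → F[X]) (hirr : ∀ i, Irreducible (f i)) (hmon : ∀ i, (f i).Monic)
    (hdist : Function.Injective f)
    (hfact : ∏ i, f i = X ^ n - 1)
    (V : Fin N → Submodule F (F[X] ⧸ Ideal.span {(X ^ n - 1 : F[X])}))
    (hV : ∀ i, V i = Submodule.map
      (Ideal.Quotient.mkₐ F (Ideal.span {(X ^ n - 1 : F[X])})).toLinearMap
      ((Ideal.span {∏ j ∈ Finset.univ.erase i, f j}).restrictScalars F))
    (U : Submodule F (F[X] ⧸ Ideal.span {(X ^ n - 1 : F[X])}))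
    (hU : U ≤ V ⟨0, hN⟩)
    (hcover : ∀ x ∈ V ⟨0, hN⟩, ∃ r : ℕ,
      (Ideal.Quotient.mk (Ideal.span {(X ^ n - 1 : F[X])}) X) ^ r * x ∈ U) :
    (∀ x : F[X] ⧸ Ideal.span {(X ^ n - 1 : F[X])}, ∃ r : ℕ,
      (Ideal.Quotient.mk (Ideal.span {(X ^ n - 1 : F[X])}) X) ^ r * x ∈
        U ⊔ ⨆ i : Fin N, ⨆ (_ : i ≠ ⟨0, hN⟩), V i) ∧
    finrank F (F[X] ⧸ Ideal.span {(X ^ n - 1 : F[X])}) -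
      finrank F (U ⊔ ⨆ i : Fin N, ⨆ (_ : i ≠ ⟨0, hN⟩), V i : Submodule F _) =
    finrank F (V ⟨0, hN⟩) - finrank F U :=
  stmt_7_general F n N hN f hirr hmon hdist hfact V hV U hU hcover
end

section
/- Let q be a prime power and k, d positive integers with gcd(d+1, q^k − 1) = 1. Set n = (q^{k(d+1)} − 1)/(q^k − 1). Then h_q(n) = kd. -/
open Polynomial Module

/-!
Upper bound: if `U` is cyclically covering, every vector lies in one of the `n` subspaces
`σ⁻ʳ U`, so `q ^ n ≤ n * q ^ dim U`; as `n < q ^ (k * d + 1)`, the codimension is at most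
`k * d`.

Lower bound: put `m = k * (d + 1)` and `E = 𝔽_{q^m}`. Then `n * (q ^ k - 1) = q ^ m - 1` and
`n ≡ d + 1 [MOD q ^ k - 1]`, so `n` is coprime to `q ^ k - 1` and the cyclic group `Eˣ` is the
product of a subgroup `⟨β⟩` of order `n` and the group of `(q ^ k - 1)`-th roots of unity,
which lie in the subfield `𝔽_{q^k}`. The map `f ↦ ∑ f i * β ^ i` from `F ^ n` to `E` turns
the cyclic shift into division by `β`, so the preimage of `𝔽_{q^k}` is cyclically covering.
The map is onto because `β` lies in no proper subfield of `E` (those have at most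
`q ^ (m / 2) ≤ q ^ (k * d) ≤ n` elements), hence that preimage has codimension `m - k = k * d`.
-/

section CycShift

variable {F : Type*} {n : ℕ}

lemma cycShift_eq_comp_finRotate (x : Fin n → F) : cycShift F n x = x ∘ finRotate n := by
  funext i
  have := i.neZero
  simp only [cycShift, Function.comp_apply, finRotate_apply]
  congr 1
  ext
  simp [Fin.val_add]

lemma cycShift_injective : Function.Injective (cycShift F n) := fun x y h => by
  simpa [cycShift_eq_comp_finRotate, (finRotate n).surjective.injective_comp_right.eq_iff] using h

lemma cycShift_iterate_apply (r : ℕ) (x : Fin n → F) (i : Fin n) :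
    (cycShift F n)^[r] x i = x ⟨(i + r) % n, Nat.mod_lt _ i.pos⟩ := by
  induction r generalizing x with
  | zero => simp [Nat.mod_eq_of_lt i.2]
  | succ r ih =>
    rw [Function.iterate_succ_apply, ih]
    simp only [cycShift, Nat.mod_add_mod, add_assoc]

lemma cycShift_isPeriodicPt (x : Fin n → F) : Function.IsPeriodicPt (cycShift F n) n x := by
  funext i
  simp [cycShift_iterate_apply, Nat.mod_eq_of_lt i.2]

lemma IsCycCovering.exists_lt [Field F] {U : Submodule F (Fin n → F)} (hU : IsCycCovering F n U)
    (hn : 0 < n) (x : Fin n → F) : ∃ r < n, (cycShift F n)^[r] x ∈ U := by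
  obtain ⟨r, hr⟩ := hU x
  exact ⟨r % n, Nat.mod_lt _ hn, (cycShift_isPeriodicPt x).iterate_mod_apply r ▸ hr⟩

lemma IsCycCovering.card_pow_codim_le [Field F] [Fintype F] {U : Submodule F (Fin n → F)}
    (hU : IsCycCovering F n U) (hn : 0 < n) :
    Fintype.card F ^ (finrank F (Fin n → F) - finrank F U) ≤ n := by
  classical
  choose r hr hrU using hU.exists_lt hn
  have hinj : Function.Injective fun x => ((⟨r x, hr x⟩ : Fin n), (⟨_, hrU x⟩ : U)) := by
    intro x y hxy
    simp only [Prod.mk.injEq, Fin.mk.injEq, Subtype.mk.injEq] at hxy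
    obtain ⟨hrxy, hxy⟩ := hxy
    rw [hrxy] at hxy
    exact cycShift_injective.iterate _ hxy
  have hcard := Fintype.card_le_of_injective _ hinj
  rw [Fintype.card_prod, Fintype.card_fin, card_eq_pow_finrank (K := F) (V := U),
    card_eq_pow_finrank (K := F) (V := Fin n → F),
    ← pow_sub_mul_pow _ (Submodule.finrank_le U)] at hcard
  exact Nat.le_of_mul_le_mul_right hcard (pow_pos Fintype.card_pos _)

end CycShift

section RepunitSum

open Finset

variable (q k d : ℕ)

lemma sum_pow_mul_mul_pow_sub_one (hq : 1 ≤ q) :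
    (∑ r ∈ range (d + 1), q ^ (k * r)) * (q ^ k - 1) = q ^ (k * (d + 1)) - 1 := by
  simp_rw [pow_mul]
  exact geom_sum_mul_of_one_le (Nat.one_le_pow _ _ hq) _

lemma coprime_sum_pow_mul (hq : 0 < q) (h : Nat.gcd (d + 1) (q ^ k - 1) = 1) :
    Nat.Coprime (∑ r ∈ range (d + 1), q ^ (k * r)) (q ^ k - 1) := by
  have hmod : ∑ r ∈ range (d + 1), q ^ (k * r) ≡ d + 1 [MOD q ^ k - 1] := by
    simpa [pow_mul] using Nat.ModEq.sum (s := range (d + 1))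
      fun r _ => (Nat.modEq_sub (Nat.one_le_pow k q hq)).pow r
  rw [Nat.Coprime, hmod.gcd_eq, h]

lemma pow_mul_le_sum_pow_mul : q ^ (k * d) ≤ ∑ r ∈ range (d + 1), q ^ (k * r) :=
  single_le_sum (f := fun r => q ^ (k * r)) (fun _ _ => Nat.zero_le _) (self_mem_range_succ d)

lemma sum_pow_mul_lt_pow (hq : 2 ≤ q) (hk : 0 < k) :
    ∑ r ∈ range (d + 1), q ^ (k * r) < q ^ (k * d + 1) := by
  rw [← sum_image (g := (k * ·)) (by intro a _ b _ h; exact Nat.eq_of_mul_eq_mul_left hk h)]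
  refine Nat.geomSum_lt hq ?_
  simp only [mem_image, mem_range]
  rintro _ ⟨r, hr, rfl⟩
  have := Nat.mul_le_mul_left k (Nat.lt_succ_iff.mp hr)
  omega

end RepunitSum

lemma IsCycCovering.codim_le {F : Type*} [Field F] [Fintype F] {k d n : ℕ}
    {U : Submodule F (Fin n → F)} (hU : IsCycCovering F n U) (hk : 0 < k)
    (hn : n = ∑ r ∈ Finset.range (d + 1), Fintype.card F ^ (k * r)) :
    finrank F (Fin n → F) - finrank F U ≤ k * d := by
  have hq : 2 ≤ Fintype.card F := Fintype.one_lt_card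
  have hn0 : 0 < n := hn ▸ (pow_pos (by omega) _).trans_le (pow_mul_le_sum_pow_mul _ k d)
  rw [← Nat.lt_succ_iff, ← Nat.pow_lt_pow_iff_right (by omega : 1 < Fintype.card F)]
  exact (hU.card_pow_codim_le hn0).trans_lt (hn ▸ sum_pow_mul_lt_pow _ k d hq hk)

lemma exists_eq_pow_pow_mul_of_coprime {G : Type*} [Group G] [Finite G] {ζ : G}
    (hζ : ∀ y, y ∈ Subgroup.zpowers ζ) {n D : ℕ} (hord : orderOf ζ = n * D)
    (hcop : n.Coprime D) (y : G) : ∃ r : ℕ, ∃ w : G, w ^ D = 1 ∧ y = (ζ ^ D) ^ r * w := by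
  obtain ⟨t, rfl⟩ := Subgroup.mem_zpowers_iff.mp (hζ y)
  have hbez : (n : ℤ) * n.gcdA D + D * n.gcdB D = 1 := by
    have := Nat.gcd_eq_gcd_ab n D
    rw [hcop.gcd_eq_one] at this
    exact_mod_cast this.symm
  obtain ⟨r, hr : (ζ ^ D) ^ r = _⟩ :=
    mem_powers_iff_mem_zpowers.mpr (Subgroup.zpow_mem_zpowers (ζ ^ D) (t * n.gcdB D))
  refine ⟨r, (ζ ^ n) ^ (t * n.gcdA D), ?_, ?_⟩
  · rw [← zpow_natCast _ D, ← zpow_mul, mul_comm, zpow_mul, zpow_natCast, ← pow_mul,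
      ← hord, pow_orderOf_eq_one, one_zpow]
  · rw [hr, ← zpow_natCast ζ D, ← zpow_natCast ζ n, ← zpow_mul, ← zpow_mul, ← zpow_add]
    congr 1
    linear_combination (-t) * hbez

lemma exists_orderOf_eq_forall_eq_pow_mul {E : Type*} [Field E] [Finite E] {n D : ℕ}
    (hnD : n * D = Nat.card E - 1) (hcop : n.Coprime D) :
    ∃ β : E, orderOf β = n ∧ ∀ y : E, y ≠ 0 → ∃ r : ℕ, ∃ w : E, w ^ D = 1 ∧ y = β ^ r * w := by
  have hD : 0 < D := Nat.pos_of_ne_zero fun hD => by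
    have : 1 < Nat.card E := Finite.one_lt_card
    simp only [hD, mul_zero] at hnD
    omega
  obtain ⟨ζ, hζ⟩ := IsCyclic.exists_generator (α := Eˣ)
  have hordζ : orderOf ζ = n * D := by
    rw [orderOf_eq_card_of_forall_mem_zpowers hζ, Nat.card_units, hnD]
  refine ⟨↑(ζ ^ D), ?_, fun y hy => ?_⟩
  · rw [orderOf_units, orderOf_pow_of_dvd hD.ne' (hordζ ▸ dvd_mul_left D n), hordζ,
      Nat.mul_div_cancel _ hD]
  obtain ⟨r, w, hw, hyw⟩ := exists_eq_pow_pow_mul_of_coprime hζ hordζ hcop (Units.mk0 y hy)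
  refine ⟨r, w, by rw [← Units.val_pow_eq_pow_val, hw, Units.val_one], ?_⟩
  simpa only [Units.val_mk0, Units.val_mul, Units.val_pow_eq_pow_val (ζ ^ D) r]
    using congrArg Units.val hyw

lemma natCard_pow_eq_self_le {E : Type*} [Field E] {N : ℕ} (hN : 1 < N) :
    Nat.card {x : E // x ^ N = x} ≤ N := by
  have hrootSet : (X ^ N - X : E[X]).rootSet E = {x | x ^ N = x} := by
    ext x
    simp [mem_rootSet, FiniteField.X_pow_card_sub_X_ne_zero E hN, sub_eq_zero]
  calc Nat.card {x : E // x ^ N = x} = ((X ^ N - X : E[X]).rootSet E).ncard := by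
        rw [hrootSet]; rfl
    _ ≤ (X ^ N - X : E[X]).natDegree := ncard_rootSet_le _ _
    _ = N := FiniteField.X_pow_card_sub_X_natDegree_eq E hN

section FiniteField

open scoped IntermediateField

variable {F E : Type*} [Field F] [Fintype F] [Field E] [Algebra F E]

lemma mem_equalizer_frobeniusAlgHom_pow {k : ℕ} {x : E} :
    x ∈ AlgHom.equalizer (FiniteField.frobeniusAlgHom F E ^ k) (AlgHom.id F E) ↔
      x ^ Fintype.card F ^ k = x := by
  rw [AlgHom.mem_equalizer, AlgHom.coe_pow, FiniteField.coe_frobeniusAlgHom, pow_iterate]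
  rfl

lemma finrank_equalizer_frobeniusAlgHom_pow_le [Finite E] {k : ℕ} (hk : k ≠ 0) :
    finrank F (AlgHom.equalizer (FiniteField.frobeniusAlgHom F E ^ k) (AlgHom.id F E)) ≤
      k := by
  set S := AlgHom.equalizer (FiniteField.frobeniusAlgHom F E ^ k) (AlgHom.id F E)
  have hq : 1 < Fintype.card F := Fintype.one_lt_card
  rw [← Nat.pow_le_pow_iff_right hq]
  calc Fintype.card F ^ finrank F S = Nat.card S := by
        rw [Module.natCard_eq_pow_finrank (K := F), Nat.card_eq_fintype_card]
    _ = Nat.card {x : E // x ^ Fintype.card F ^ k = x} :=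
        Nat.card_congr (Equiv.subtypeEquivRight fun _ => mem_equalizer_frobeniusAlgHom_pow)
    _ ≤ Fintype.card F ^ k := natCard_pow_eq_self_le (Nat.one_lt_pow hk hq)

lemma pow_card_pow_finrank_eq_self [Finite E] {L : IntermediateField F E} {x : E} (hx : x ∈ L) :
    x ^ Fintype.card F ^ finrank F L = x := by
  have := Fintype.ofFinite L
  rw [← Module.card_eq_pow_finrank]
  exact congrArg Subtype.val (FiniteField.pow_card (⟨x, hx⟩ : L))

lemma adjoin_simple_eq_top_of_le_orderOf [Finite E] {β : E}
    (h : Fintype.card F ^ (finrank F E / 2) ≤ orderOf β) : F⟮β⟯ = ⊤ := by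
  set q := Fintype.card F
  set t := finrank F F⟮β⟯
  have hq : 1 < q := Fintype.one_lt_card
  have hβ : β ≠ 0 := by
    rintro rfl
    simp only [orderOf_zero, nonpos_iff_eq_zero, pow_eq_zero_iff', ne_eq] at h
    omega
  have hdvd : orderOf β ∣ q ^ t - 1 := by
    refine orderOf_dvd_of_pow_eq_one (mul_left_cancel₀ hβ ?_)
    rw [← pow_succ', Nat.sub_add_cancel (Nat.one_le_pow _ _ (by omega)), mul_one,
      pow_card_pow_finrank_eq_self (IntermediateField.mem_adjoin_simple_self F β)]
  by_contra hne
  have hc : 2 ≤ finrank F⟮β⟯ E := by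
    have := (IntermediateField.finrank_eq_one_iff_eq_top (K := F⟮β⟯)).not.mpr hne
    have : 0 < finrank F⟮β⟯ E := finrank_pos
    omega
  have ht : t ≤ finrank F E / 2 := by
    rw [Nat.le_div_iff_mul_le two_pos, ← Module.finrank_mul_finrank F F⟮β⟯ E]
    exact Nat.mul_le_mul_left t hc
  have hqt : 2 ≤ q ^ t := Nat.one_lt_pow finrank_pos.ne' hq
  have := Nat.le_of_dvd (by omega) hdvd
  have := Nat.pow_le_pow_right (by omega : 0 < q) ht
  omega

end FiniteField

noncomputable def powerCombination (F : Type*) {E : Type*} [CommSemiring F] [Semiring E]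
    [Algebra F E] (n : ℕ) (β : E) : (Fin n → F) →ₗ[F] E :=
  Fintype.linearCombination F fun i : Fin n => β ^ (i : ℕ)

section PowerCombination

variable {F E : Type*} {n : ℕ} {β : E}

section Semiring

variable [CommSemiring F] [Semiring E] [Algebra F E]

lemma powerCombination_apply (f : Fin n → F) :
    powerCombination F n β f = ∑ i, f i • β ^ (i : ℕ) :=
  Fintype.linearCombination_apply _ _ _

lemma powerCombination_cycShift_mul (hβ : β ^ n = 1) (f : Fin n → F) :
    powerCombination F n β (cycShift F n f) * β = powerCombination F n β f := by
  rw [powerCombination_apply, powerCombination_apply, Finset.sum_mul,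
    ← Equiv.sum_comp (finRotate n) fun j => f j • β ^ (j : ℕ), cycShift_eq_comp_finRotate]
  refine Finset.sum_congr rfl fun i _ => ?_
  have := i.neZero
  rw [Function.comp_apply, smul_mul_assoc, ← pow_succ, pow_eq_pow_mod _ hβ, finRotate_apply]
  congr 2
  simp [Fin.val_add]

lemma powerCombination_cycShift_iterate_mul (hβ : β ^ n = 1) (r : ℕ) (f : Fin n → F) :
    powerCombination F n β ((cycShift F n)^[r] f) * β ^ r = powerCombination F n β f := by
  induction r generalizing f with
  | zero => simp
  | succ r ih =>
    rw [Function.iterate_succ_apply, pow_succ, ← mul_assoc, ih, powerCombination_cycShift_mul hβ]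

lemma range_powerCombination (hβ : β ^ n = 1) (hn : 0 < n) :
    LinearMap.range (powerCombination F n β) = Subalgebra.toSubmodule (Algebra.adjoin F {β}) := by
  rw [powerCombination, Fintype.range_linearCombination, Algebra.adjoin_eq_span,
    ← Submonoid.powers_eq_closure, Submonoid.coe_powers]
  congr 1
  ext x
  constructor
  · rintro ⟨i, rfl⟩
    exact ⟨i, rfl⟩
  · rintro ⟨j, rfl⟩
    exact ⟨⟨j % n, Nat.mod_lt _ hn⟩, (pow_eq_pow_mod j hβ).symm⟩

end Semiring

section Field

variable [Field F] [Field E] [Algebra F E]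

lemma isCycCovering_comap_powerCombination (hβ : β ^ n = 1) {K : Submodule F E}
    (hK : ∀ y : E, y ≠ 0 → ∃ r : ℕ, ∃ w ∈ K, y = β ^ r * w) :
    IsCycCovering F n (K.comap (powerCombination F n β)) := by
  intro f
  by_cases h0 : powerCombination F n β f = 0
  · exact ⟨0, by simp [h0]⟩
  obtain ⟨r, w, hw, hy⟩ := hK _ h0
  refine ⟨r, ?_⟩
  rw [Submodule.mem_comap]
  convert hw using 1
  refine mul_left_cancel₀ (left_ne_zero_of_mul (hy ▸ h0)) ?_
  rw [← hy, mul_comm, powerCombination_cycShift_iterate_mul hβ]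

end Field

end PowerCombination

lemma finrank_sub_finrank_comap_of_surjective {K V W : Type*} [DivisionRing K] [AddCommGroup V]
    [Module K V] [FiniteDimensional K V] [AddCommGroup W] [Module K W] [FiniteDimensional K W]
    {φ : V →ₗ[K] W} (hφ : Function.Surjective φ) (S : Submodule K W) :
    finrank K V - finrank K (S.comap φ) = finrank K W - finrank K S := by
  have hker : LinearMap.ker (S.mkQ ∘ₗ φ) = S.comap φ := by
    rw [LinearMap.ker_comp, Submodule.ker_mkQ]
  rw [← Submodule.finrank_quotient, ← Submodule.finrank_quotient, ← hker]
  exact ((S.mkQ ∘ₗ φ).quotKerEquivOfSurjective (S.mkQ_surjective.comp hφ)).finrank_eq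

open scoped IntermediateField in
theorem exists_isCycCovering_le_codim (F E : Type*) [Field F] [Fintype F] [Field E] [Finite E]
    [Algebra F E] {k d n : ℕ} (hk : 0 < k) (hd : 0 < d) (hE : finrank F E = k * (d + 1))
    (hgcd : Nat.gcd (d + 1) (Fintype.card F ^ k - 1) = 1)
    (hn : n = ∑ r ∈ Finset.range (d + 1), Fintype.card F ^ (k * r)) :
    ∃ U : Submodule F (Fin n → F), IsCycCovering F n U ∧
      k * d ≤ finrank F (Fin n → F) - finrank F U := by
  set q := Fintype.card F
  have hq : 1 < q := Fintype.one_lt_card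
  have hcardE : Nat.card E = q ^ finrank F E := by
    rw [Module.natCard_eq_pow_finrank (K := F), Nat.card_eq_fintype_card]
  have hnD : n * (q ^ k - 1) = Nat.card E - 1 :=
    hn ▸ hcardE ▸ hE ▸ sum_pow_mul_mul_pow_sub_one q k d hq.le
  have hqn : q ^ (k * d) ≤ n := hn ▸ pow_mul_le_sum_pow_mul q k d
  obtain ⟨β, hβord, hβ⟩ := exists_orderOf_eq_forall_eq_pow_mul hnD
    (hn ▸ coprime_sum_pow_mul q k d (by omega) hgcd)
  have hβn : β ^ n = 1 := hβord ▸ pow_orderOf_eq_one β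
  have hgen : F⟮β⟯ = ⊤ := by
    refine adjoin_simple_eq_top_of_le_orderOf (hβord ▸ le_trans ?_ hqn)
    refine Nat.pow_le_pow_right (by omega) (Nat.div_le_of_le_mul ?_)
    rw [hE, Nat.mul_succ]
    have := Nat.le_mul_of_pos_right k hd
    omega
  have hsurj : Function.Surjective (powerCombination F n β) := by
    rw [← LinearMap.range_eq_top,
      range_powerCombination hβn ((pow_pos (by omega) _).trans_le hqn),
      ← IntermediateField.adjoin_simple_toSubalgebra_of_isAlgebraic
        (Algebra.IsAlgebraic.isAlgebraic β), hgen]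
    rfl
  set K := AlgHom.equalizer (FiniteField.frobeniusAlgHom F E ^ k) (AlgHom.id F E)
  refine ⟨(Subalgebra.toSubmodule K).comap (powerCombination F n β),
    isCycCovering_comap_powerCombination hβn fun y hy => ?_, ?_⟩
  · obtain ⟨r, w, hw, hyw⟩ := hβ y hy
    refine ⟨r, w, mem_equalizer_frobeniusAlgHom_pow.mpr ?_, hyw⟩
    rw [← Nat.sub_add_cancel (Nat.one_le_pow k q (by omega)), pow_succ, hw, one_mul]
  · have hK : finrank F K ≤ k := finrank_equalizer_frobeniusAlgHom_pow_le hk.ne'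
    rw [finrank_sub_finrank_comap_of_surjective hsurj, hE, Subalgebra.finrank_toSubmodule,
      Nat.mul_succ]
    omega

/-- With gcd(d+1, q^k − 1) = 1 and n = (q^{k(d+1)} − 1)/(q^k − 1) = Σ_{r=0}^d q^{kr},
h_q(n) = kd. -/
theorem stmt_9 (F : Type*) [Field F] [Fintype F] (k d n : ℕ) (hk : 0 < k) (hd : 0 < d)
    (hgcd : Nat.gcd (d + 1) (Fintype.card F ^ k - 1) = 1)
    (hn : n = ∑ r ∈ Finset.range (d + 1), Fintype.card F ^ (k * r)) :
    hq F n = k * d := by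
  have : Fact (ringChar F).Prime := ⟨CharP.char_is_prime F _⟩
  have : NeZero (k * (d + 1)) := ⟨by positivity⟩
  obtain ⟨U, hU, hcodim⟩ := exists_isCycCovering_le_codim F
    (FiniteField.Extension F (ringChar F) (k * (d + 1))) hk hd
    (FiniteField.finrank_extension _ _ _) hgcd hn
  have hbdd : k * d ∈ upperBounds {c | ∃ V : Submodule F (Fin n → F), IsCycCovering F n V ∧
      finrank F (Fin n → F) - finrank F V = c} := by
    rintro _ ⟨V, hV, rfl⟩
    exact hV.codim_le hk hn
  exact le_antisymm (csSup_le ⟨_, U, hU, rfl⟩ hbdd)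
    (hcodim.trans (le_csSup ⟨_, hbdd⟩ ⟨U, hU, rfl⟩))
end

section
/- Let G be a finite group, F a field with char(F) not dividing |G|, V a finite-dimensional F-vector space, ρ: G → GL(V) a representation, and W a G-invariant subspace of V. Then h_{G,ρ}(W) ≤ h_{G,ρ}(V), i.e. the maximum codimension of a (G,ρ)-covering subspace of W (with respect to the restricted action) is at most the maximum codimension of a (G,ρ)-covering subspace of V. -/
/-!
By Maschke's theorem `W` has a `G`-invariant complement `W'`. If `U ≤ W` covers `W`, then
`U ⊔ W'` covers `V = W ⊕ W'`: write `v = w + w'` and pick `g` with `ρ g w ∈ U`, then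
`ρ g w' ∈ W'`. Its codimension in `V` equals that of `U` in `W`.
-/

open Module

/-- `hrep ρ W` : the maximum codimension (inside `W`) of a subspace `U ≤ W` such that the
union of the images of `U` under the action of `G` (via `ρ`) covers `W`. -/
noncomputable def hrep {F G V : Type*} [Field F] [Monoid G] [AddCommGroup V] [Module F V]
    (ρ : Representation F G V) (W : Submodule F V) : ℕ :=
  sSup {k | ∃ U : Submodule F V, U ≤ W ∧ (∀ v ∈ W, ∃ g : G, ρ g v ∈ U) ∧
    Module.finrank F W - Module.finrank F U = k}

theorem Submodule.finrank_sup_of_disjoint {K V : Type*} [DivisionRing K] [AddCommGroup V]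
    [Module K V] [FiniteDimensional K V] {s t : Submodule K V} (h : Disjoint s t) :
    finrank K ↥(s ⊔ t) = finrank K s + finrank K t := by
  rw [← Submodule.finrank_sup_add_finrank_inf_eq s t, h.eq_bot, finrank_bot, add_zero]

theorem Representation.exists_isCompl_invariant {F G V : Type*} [Field F] [Group G] [Finite G]
    [NeZero (Nat.card G : F)] [AddCommGroup V] [Module F V] (ρ : Representation F G V)
    (W : Submodule F V) (hW : ∀ g : G, ∀ w ∈ W, ρ g w ∈ W) :
    ∃ W' : Submodule F V, IsCompl W W' ∧ ∀ g : G, ∀ w ∈ W', ρ g w ∈ W' := by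
  obtain ⟨σ', hσ'⟩ := exists_isCompl (⟨W, fun g _ hw => hW g _ hw⟩ : Subrepresentation ρ)
  exact ⟨σ'.toSubmodule,
    ⟨disjoint_iff.mpr (congrArg Subrepresentation.toSubmodule hσ'.disjoint.eq_bot),
      codisjoint_iff.mpr (congrArg Subrepresentation.toSubmodule hσ'.codisjoint.eq_top)⟩,
    σ'.apply_mem_toSubmodule⟩

section hrep

variable {F G V : Type*} [Field F] [Monoid G] [AddCommGroup V] [Module F V]
  {ρ : Representation F G V} {W U : Submodule F V}

theorem le_hrep (hUW : U ≤ W) (hcov : ∀ v ∈ W, ∃ g : G, ρ g v ∈ U) :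
    finrank F W - finrank F U ≤ hrep ρ W :=
  le_csSup ⟨finrank F W, by rintro _ ⟨U, -, -, rfl⟩; exact Nat.sub_le _ _⟩ ⟨U, hUW, hcov, rfl⟩

theorem exists_covering_finrank_sub_eq_hrep (ρ : Representation F G V) (W : Submodule F V) :
    ∃ U ≤ W, (∀ v ∈ W, ∃ g : G, ρ g v ∈ U) ∧ finrank F W - finrank F U = hrep ρ W := by
  obtain ⟨U, hUW, hcov, hU⟩ : hrep ρ W ∈ {k | ∃ U : Submodule F V, U ≤ W ∧
      (∀ v ∈ W, ∃ g : G, ρ g v ∈ U) ∧ finrank F W - finrank F U = k} :=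
    Nat.sSup_mem ⟨0, W, le_rfl, fun v hv => ⟨1, by simpa using hv⟩, Nat.sub_self _⟩
      ⟨finrank F W, by rintro _ ⟨U, -, -, rfl⟩; exact Nat.sub_le _ _⟩
  exact ⟨U, hUW, hcov, hU⟩

theorem hrep_le_hrep_sup [FiniteDimensional F V] {W' : Submodule F V}
    (hW' : ∀ g : G, ∀ w ∈ W', ρ g w ∈ W') (hdisj : Disjoint W W') :
    hrep ρ W ≤ hrep ρ (W ⊔ W') := by
  obtain ⟨U, hUW, hcov, hU⟩ := exists_covering_finrank_sub_eq_hrep ρ W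
  have hcov' : ∀ v ∈ W ⊔ W', ∃ g : G, ρ g v ∈ U ⊔ W' := by
    intro v hv
    obtain ⟨w, hw, w', hw', rfl⟩ := Submodule.mem_sup.mp hv
    obtain ⟨g, hg⟩ := hcov w hw
    exact ⟨g, by rw [map_add]; exact Submodule.add_mem_sup hg (hW' g w' hw')⟩
  calc hrep ρ W = finrank F ↥(W ⊔ W') - finrank F ↥(U ⊔ W') := by
        rw [Submodule.finrank_sup_of_disjoint hdisj,
          Submodule.finrank_sup_of_disjoint (hdisj.mono_left hUW), ← hU]
        omega
    _ ≤ hrep ρ (W ⊔ W') := le_hrep (sup_le_sup_right hUW W') hcov'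

end hrep

/-- For G finite with char F ∤ |G| and W a G-invariant subspace of V,
h_{G,ρ}(W) ≤ h_{G,ρ}(V). -/
theorem stmt_12 (G : Type*) [Group G] [Finite G] (F V : Type*) [Field F] [AddCommGroup V]
    [Module F V] [FiniteDimensional F V] (hchar : ¬ (ringChar F ∣ Nat.card G))
    (ρ : Representation F G V) (W : Submodule F V)
    (hW : ∀ g : G, ∀ w ∈ W, ρ g w ∈ W) :
    hrep ρ W ≤ hrep ρ (⊤ : Submodule F V) := by
  have : NeZero (Nat.card G : F) := NeZero.of_not_dvd F hchar
  obtain ⟨W', hcompl, hW'⟩ := ρ.exists_isCompl_invariant W hW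
  simpa [hcompl.sup_eq_top] using hrep_le_hrep_sup hW' hcompl.disjoint
end

section
/- Let G be a group, (ρ,V) a representation of G over a field, and suppose V = ⊕_i W_i with each W_i a G-invariant subspace. Then h_{G,ρ}(V) ≤ Σ_i h_{G,ρ}(W_i). -/
open Module DirectSum

lemma hrep_bddAbove {F G V : Type*} [Field F] [Monoid G] [AddCommGroup V] [Module F V]
    (ρ : Representation F G V) (W : Submodule F V) :
    BddAbove {k | ∃ U : Submodule F V, U ≤ W ∧ (∀ v ∈ W, ∃ g : G, ρ g v ∈ U) ∧
      Module.finrank F W - Module.finrank F U = k} := by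
  refine ⟨Module.finrank F W, ?_⟩
  rintro k ⟨U, -, -, rfl⟩
  exact Nat.sub_le _ _

/-- If V = ⊕ᵢ Wᵢ with each Wᵢ G-invariant, then h_{G,ρ}(V) ≤ Σᵢ h_{G,ρ}(Wᵢ). -/
theorem stmt_13 (G : Type*) [Group G] (F V : Type*) [Field F] [AddCommGroup V] [Module F V]
    (ρ : Representation F G V) (ι : Type*) [Fintype ι] [DecidableEq ι] (W : ι → Submodule F V)
    (hint : DirectSum.IsInternal W)
    (hinv : ∀ i, ∀ g : G, ∀ w ∈ W i, ρ g w ∈ W i) :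
    hrep ρ (⊤ : Submodule F V) ≤ ∑ i, hrep ρ (W i) := by
  conv_lhs => rw [hrep]
  apply csSup_le
  · exact ⟨0, ⊤, le_rfl, fun v hv => ⟨1, by simp⟩, by simp⟩
  rintro k ⟨U, -, hcov, rfl⟩
  by_cases hfd : FiniteDimensional F V
  · set Ui : ι → Submodule F V := fun i => U ⊓ W i with hUidef
    have hcovi : ∀ i, ∀ v ∈ W i, ∃ g : G, ρ g v ∈ Ui i := by
      intro i v hv
      obtain ⟨g, hg⟩ := hcov v trivial
      exact ⟨g, hg, hinv i g v hv⟩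
    have hmem : ∀ i, finrank F (W i) - finrank F (Ui i) ≤ hrep ρ (W i) := fun i =>
      le_csSup (hrep_bddAbove ρ (W i)) ⟨Ui i, inf_le_right, hcovi i, rfl⟩
    have hVsum : finrank F V = ∑ i, finrank F (W i) := by
      have e : (⨁ i, W i) ≃ₗ[F] V := LinearEquiv.ofBijective (DirectSum.coeLinearMap W) hint
      rw [← e.finrank_eq, finrank_directSum]
    have hindep : iSupIndep Ui := hint.submodule_iSupIndep.mono fun i => inf_le_right
    have hUsum : ∑ i, finrank F (Ui i) ≤ finrank F U := by
      have hinj := hindep.dfinsupp_lsum_injective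
      have hrange : ∀ x : Π₀ i, Ui i, DFinsupp.lsum ℕ (fun i => (Ui i).subtype) x ∈ U := by
        intro x
        have hx : DFinsupp.lsum ℕ (fun i => (Ui i).subtype) x ∈ ⨆ i, Ui i := by
          rw [Submodule.iSup_eq_range_dfinsupp_lsum]
          exact ⟨x, rfl⟩
        exact (iSup_le fun i => inf_le_left : (⨆ i, Ui i) ≤ U) hx
      have h1 : finrank F (Π₀ i, Ui i) ≤ finrank F U :=
        LinearMap.finrank_le_finrank_of_injective
          (f := (DFinsupp.lsum ℕ (fun i => (Ui i).subtype)).codRestrict U hrange)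
          (fun a b hab => hinj (congrArg Subtype.val hab))
      have h2 : finrank F (⨁ i, Ui i) = ∑ i, finrank F (Ui i) := finrank_directSum (R := F) fun i => ↥(Ui i)
      exact h2 ▸ h1
    have hwu : ∀ i, finrank F (Ui i) ≤ finrank F (W i) := fun i =>
      Submodule.finrank_mono inf_le_right
    calc finrank F (⊤ : Submodule F V) - finrank F U
        ≤ ∑ i, (finrank F (W i) - finrank F (Ui i)) := by
          rw [finrank_top, hVsum, Finset.sum_tsub_distrib Finset.univ (fun i _ => hwu i)]
          exact Nat.sub_le_sub_left hUsum _
      _ ≤ ∑ i, hrep ρ (W i) := Finset.sum_le_sum fun i _ => hmem i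
  · have h0 : finrank F (⊤ : Submodule F V) = 0 := by
      rw [finrank_top]
      exact Module.finrank_of_infinite_dimensional hfd
    simp [h0]
end

section
/- Suppose a finite p-group Q acts on a finite p-group P by automorphisms, and H is a subgroup of P such that the union over g ∈ Q of the images H^g equals P. Then H = P. -/
/-!
Induct on `|P|`. Since `Q` is a `p`-group acting on the nontrivial `p`-group `Z(P)`, it fixes
some `z ≠ 1` in `Z(P)`. As `z` is fixed, the only `h` with `z = h^g` is `z` itself, so `z ∈ H`.
The cyclic group `⟨z⟩` is normal and `Q`-invariant, so `Q` acts on `P ⧸ ⟨z⟩`, where the images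
of `H ⧸ ⟨z⟩` still cover; by induction `H ⧸ ⟨z⟩` is everything, hence `H = P`.
-/

open Subgroup

section

variable {Q P : Type*} [Group Q] [Group P]

theorem IsPGroup.exists_ne_one_forall_apply_eq {p : ℕ} [Fact p.Prime] {A : Type*} [Group A]
    [Finite A] [Nontrivial A] (hQ : IsPGroup p Q) (hA : IsPGroup p A) (φ : Q →* MulAut A) :
    ∃ a : A, a ≠ 1 ∧ ∀ g, φ g a = a := by
  let := MulAction.compHom A φ
  have hdvd : p ∣ Nat.card A := hA.card_eq_or_dvd.resolve_left Finite.one_lt_card.ne'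
  have hone : (1 : A) ∈ MulAction.fixedPoints Q A := fun g => map_one (φ g)
  obtain ⟨a, ha, hne⟩ := hQ.exists_fixed_point_of_prime_dvd_card_of_fixed_point A hdvd hone
  exact ⟨a, hne.symm, ha⟩

theorem IsPGroup.exists_ne_one_mem_center_forall_apply_eq {p : ℕ} [Fact p.Prime] [Finite P]
    [Nontrivial P] (hQ : IsPGroup p Q) (hP : IsPGroup p P) (φ : Q →* MulAut P) :
    ∃ z ∈ center P, z ≠ 1 ∧ ∀ g, φ g z = z := by
  have := hP.center_nontrivial
  obtain ⟨a, ha, hfix⟩ := hQ.exists_ne_one_forall_apply_eq (hP.to_subgroup (center P))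
    ((MulAut.characteristic (center P)).comp φ)
  exact ⟨a, a.2, by simpa using ha, fun g => congrArg Subtype.val (hfix g)⟩

theorem Subgroup.mem_of_forall_apply_eq {φ : Q →* MulAut P} {H : Subgroup P}
    (hcov : ∀ x : P, ∃ g : Q, x ∈ H.map (φ g).toMonoidHom) {z : P} (hz : ∀ g, φ g z = z) :
    z ∈ H := by
  obtain ⟨g, h, hh, rfl⟩ := hcov z
  rwa [← (φ g).injective (hz g)] at hh

def MonoidHom.quotientMulAut (φ : Q →* MulAut P) (N : Subgroup P) [N.Normal]
    (hN : ∀ g, N.map (φ g).toMonoidHom = N) : Q →* MulAut (P ⧸ N) where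
  toFun g := QuotientGroup.congr N N (φ g) (hN g)
  map_one' := by
    ext x
    induction x using QuotientGroup.induction_on
    simp
  map_mul' g h := by
    ext x
    induction x using QuotientGroup.induction_on
    simp only [map_mul]
    rfl

theorem Subgroup.forall_exists_mem_map_quotientMulAut {φ : Q →* MulAut P} {H : Subgroup P}
    (hcov : ∀ x : P, ∃ g : Q, x ∈ H.map (φ g).toMonoidHom) (N : Subgroup P) [N.Normal]
    (hN : ∀ g, N.map (φ g).toMonoidHom = N) (x : P ⧸ N) :
    ∃ g : Q, x ∈ (H.map (QuotientGroup.mk' N)).map (φ.quotientMulAut N hN g).toMonoidHom := by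
  induction x using QuotientGroup.induction_on with
  | H y =>
    obtain ⟨g, h, hh, rfl⟩ := hcov y
    exact ⟨g, h, ⟨h, hh, rfl⟩, rfl⟩

theorem Subgroup.eq_top_of_map_mk'_eq_top {N H : Subgroup P} [N.Normal] (hNH : N ≤ H)
    (h : H.map (QuotientGroup.mk' N) = ⊤) : H = ⊤ := by
  simpa [hNH] using congrArg (comap (QuotientGroup.mk' N)) h

theorem Subgroup.normal_of_le_center {N : Subgroup P} (hN : N ≤ center P) : N.Normal where
  conj_mem n hn g := by rwa [mem_center_iff.mp (hN hn) g, mul_inv_cancel_right]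

theorem Subgroup.card_quotient_zpowers_lt [Finite P] {z : P} (hz : z ≠ 1) :
    Nat.card (P ⧸ zpowers z) < Nat.card P := by
  rw [card_eq_card_quotient_mul_card_subgroup (zpowers z)]
  exact lt_mul_right Nat.card_pos ((one_lt_card_iff_ne_bot _).mpr (zpowers_ne_bot.mpr hz))

end

theorem stmt_15_general (p : ℕ) (hp : p.Prime) (Q P : Type*) [Group Q] [Group P]
    [Finite P] (hQ : IsPGroup p Q) (hP : IsPGroup p P) (φ : Q →* MulAut P)
    (H : Subgroup P) (hcov : ∀ x : P, ∃ g : Q, x ∈ H.map (φ g).toMonoidHom) :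
    H = ⊤ := by
  have := Fact.mk hp
  induction hn : Nat.card P using Nat.strong_induction_on generalizing P with
  | _ n ih =>
    rcases subsingleton_or_nontrivial P with _ | _
    · exact Subsingleton.elim _ _
    obtain ⟨z, hz_center, hz, hz_fix⟩ := hQ.exists_ne_one_mem_center_forall_apply_eq hP φ
    have := normal_of_le_center (zpowers_le.mpr hz_center)
    have hN : ∀ g, (zpowers z).map (φ g).toMonoidHom = zpowers z := fun g =>
      (MonoidHom.map_zpowers _ z).trans (congrArg zpowers (hz_fix g))
    refine eq_top_of_map_mk'_eq_top (zpowers_le.mpr (mem_of_forall_apply_eq hcov hz_fix)) ?_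
    exact ih _ (hn ▸ card_quotient_zpowers_lt hz) (P ⧸ zpowers z) (hP.to_quotient _)
      (φ.quotientMulAut _ hN) _ (forall_exists_mem_map_quotientMulAut hcov _ hN) rfl

/-- If a finite p-group Q acts by automorphisms on a finite p-group P, and H ≤ P is such
that the union of the images of H under Q is all of P, then H = P. -/
theorem stmt_15 (p : ℕ) (hp : p.Prime) (Q P : Type*) [Group Q] [Group P] [Finite Q]
    [Finite P] (hQ : IsPGroup p Q) (hP : IsPGroup p P) (φ : Q →* MulAut P)
    (H : Subgroup P) (hcov : ∀ x : P, ∃ g : Q, x ∈ H.map (φ g).toMonoidHom) :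
    H = ⊤ :=
  stmt_15_general p hp Q P hQ hP φ H hcov
end

section
/- Let p be a prime, q a power of p, G = A × B where A is an abelian group of exponent k dividing q − 1 and B is a finite p-group. Let G act linearly on a finite-dimensional vector space V over F_q, and let U ≤ V be a subspace such that ⋃_{g∈G} g(U) = V. Then U = V. -/
open Polynomial Module

section Aux

variable {F : Type*} [Field F] {V : Type*} [AddCommGroup V] [Module F V]

/-- `aeval T P` preserves a `T`-invariant submodule. -/
lemma aux_aeval_mem (T : Module.End F V) (W : Submodule F V)
    (hT : ∀ w ∈ W, T w ∈ W) (P : F[X]) (u : V) (hu : u ∈ W) :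
    Polynomial.aeval T P u ∈ W := by
  induction P using Polynomial.induction_on' with
  | add p q hp hq => simpa [map_add] using W.add_mem hp hq
  | monomial n b =>
    have hpow : ∀ n : ℕ, (T ^ n) u ∈ W := by
      intro n
      induction n with
      | zero => simpa using hu
      | succ n ih => rw [pow_succ', Module.End.mul_apply]; exact hT _ ih
    simpa [Polynomial.aeval_monomial, Algebra.smul_def] using W.smul_mem b (hpow n)

/-- If a product of `X - C c` kills a nonzero vector of an invariant submodule, then
there is an eigenvector inside the submodule. -/
lemma aux_chain (T : Module.End F V) (W : Submodule F V) (hT : ∀ w ∈ W, T w ∈ W) :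
    ∀ (s : Multiset F) (u : V), u ∈ W → u ≠ 0 →
      (Polynomial.aeval T ((s.map fun c => (X : F[X]) - C c)).prod) u = 0 →
      ∃ c : F, ∃ v, v ∈ W ∧ v ≠ 0 ∧ T v = c • v := by
  intro s
  induction s using Multiset.induction_on with
  | empty => intro u hu hu0 h; simp at h; exact absurd h hu0
  | cons c s ih =>
    intro u hu hu0 h
    set v := (Polynomial.aeval T ((s.map fun c => (X : F[X]) - C c)).prod) u with hv
    by_cases hv0 : v = 0
    · exact ih u hu hu0 hv0
    · refine ⟨c, v, aux_aeval_mem T W hT _ u hu, hv0, ?_⟩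
      have h2 : (T - c • 1) v = 0 := by
        have : (Polynomial.aeval T ((X : F[X]) - C c)) v = 0 := by
          rw [hv, ← Module.End.mul_apply, ← map_mul]
          rw [Multiset.map_cons, Multiset.prod_cons] at h
          exact h
        simpa [map_sub, Algebra.smul_def] using this
      have := sub_eq_zero.mp (by simpa [LinearMap.sub_apply] using h2)
      simpa using this

/-- Over a finite field, `∏ (X - C c)` over all `c` equals `X^q - X`. -/
lemma aux_prod (F : Type*) [Field F] [Fintype F] :
    ((Finset.univ.val.map fun c : F => (X : F[X]) - C c)).prod
      = X ^ Fintype.card F - X := by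
  have h1 : (1 : ℕ) < Fintype.card F := Fintype.one_lt_card
  have hroots := FiniteField.roots_X_pow_card_sub_X F
  have hmonic : ((X : F[X]) ^ Fintype.card F - X).Monic := by
    have h2 : (Fintype.card F - 1) + 1 = Fintype.card F :=
      Nat.succ_pred_eq_of_pos Fintype.card_pos
    rw [← h2]
    apply Polynomial.monic_X_pow_sub
    rw [Polynomial.degree_X]
    norm_cast
    omega
  have hdeg := FiniteField.X_pow_card_sub_X_natDegree_eq (K' := F) h1
  have hcard : ((X : F[X]) ^ Fintype.card F - X).roots.card
      = ((X : F[X]) ^ Fintype.card F - X).natDegree := by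
    rw [hroots, hdeg]; simp [Finset.card_univ]
  have := Polynomial.C_leadingCoeff_mul_prod_multiset_X_sub_C hcard
  rw [hmonic.leadingCoeff, map_one, one_mul, hroots] at this
  exact this

end Aux

section Eig

variable {F : Type*} [Field F] [Fintype F] {A : Type*} [CommGroup A]
  {V : Type*} [AddCommGroup V] [Module F V] [FiniteDimensional F V]

/-- Existence of a simultaneous eigenvector for a commuting family of operators of
order dividing `q - 1` on a nonzero invariant subspace. -/
lemma aux_eig (hA : Monoid.exponent A ∣ Fintype.card F - 1) (σ : Representation F A V) :
    ∀ (m : ℕ) (W : Submodule F V), finrank F W ≤ m → W ≠ ⊥ →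
      (∀ a : A, ∀ w ∈ W, σ a w ∈ W) →
      ∃ w ∈ W, w ≠ 0 ∧ ∀ a : A, ∃ c : F, σ a w = c • w := by
  intro m
  induction m with
  | zero =>
    intro W hrk hW _
    exact absurd (Submodule.finrank_eq_zero.mp (Nat.le_zero.mp hrk)) hW
  | succ m ih =>
    intro W hrk hW hinv
    by_cases hall : ∀ a : A, ∀ w ∈ W, ∃ c : F, σ a w = c • w
    · obtain ⟨w, hw, hw0⟩ := Submodule.exists_mem_ne_zero_of_ne_bot hW
      exact ⟨w, hw, hw0, fun a => hall a w hw⟩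
    · push_neg at hall
      obtain ⟨a, w, hw, hbad⟩ := hall
      have hw0 : w ≠ 0 := by
        rintro rfl
        exact hbad 0 (by simp)
      -- the operator σ a is killed by X^q - X
      have hkill : (Polynomial.aeval (σ a)
          ((Finset.univ.val.map fun c : F => (X : F[X]) - C c)).prod) w = 0 := by
        rw [aux_prod F]
        have hpow : (σ a) ^ (Fintype.card F - 1) = 1 := by
          obtain ⟨k, hk⟩ := hA
          rw [← map_pow, hk, pow_mul, Monoid.pow_exponent_eq_one, one_pow, map_one]
        have hq : (σ a) ^ (Fintype.card F) = σ a := by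
          have h1 : (Fintype.card F - 1) + 1 = Fintype.card F :=
            Nat.succ_pred_eq_of_pos Fintype.card_pos
          rw [← h1, pow_succ, hpow, one_mul]
        simp [map_sub, hq, Polynomial.aeval_X_pow]
      obtain ⟨c, v, hvW, hv0, hTv⟩ := aux_chain (σ a) W (hinv a) _ w hw hw0 hkill
      -- eigenspace of σ a for eigenvalue c, intersected with W
      set E : Submodule F V := W ⊓ LinearMap.ker (σ a - c • (1 : Module.End F V)) with hE
      have hmemE : ∀ x, x ∈ E ↔ x ∈ W ∧ σ a x = c • x := by
        intro x
        simp [hE, LinearMap.mem_ker, LinearMap.sub_apply, sub_eq_zero]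
      have hEbot : E ≠ ⊥ := by
        intro h
        have : v ∈ E := (hmemE v).mpr ⟨hvW, hTv⟩
        rw [h] at this
        exact hv0 (by simpa using this)
      have hElt : E < W := by
        refine lt_of_le_of_ne inf_le_left ?_
        intro h
        have : w ∈ E := h ▸ hw
        exact hbad c ((hmemE w).mp this).2
      have hEinv : ∀ a' : A, ∀ x ∈ E, σ a' x ∈ E := by
        intro a' x hx
        obtain ⟨hxW, hxE⟩ := (hmemE x).mp hx
        refine (hmemE _).mpr ⟨hinv a' x hxW, ?_⟩
        have hcomm : σ a (σ a' x) = σ a' (σ a x) := by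
          rw [← Module.End.mul_apply, ← map_mul, mul_comm, map_mul, Module.End.mul_apply]
        rw [hcomm, hxE, map_smul]
      have hrkE : finrank F E ≤ m := by
        have := Submodule.finrank_lt_finrank_of_lt hElt
        omega
      obtain ⟨w', hw', hw'0, heig⟩ := ih E hrkE hEbot hEinv
      have hEW : E ≤ W := inf_le_left
      exact ⟨w', hEW hw', hw'0, heig⟩

end Eig

section Main

/-- Main induction on dimension. -/
lemma aux_main (p : ℕ) (hp : p.Prime) (F : Type*) [Field F] [Fintype F] [CharP F p]
    (A B : Type*) [CommGroup A] [Group B] [Finite B] (hB : IsPGroup p B)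
    (hA : Monoid.exponent A ∣ Fintype.card F - 1) :
    ∀ (n : ℕ) (V : Type*) [AddCommGroup V] [Module F V] [FiniteDimensional F V]
      (ρ : Representation F (A × B) V) (U : Submodule F V),
      finrank F V ≤ n → (∀ v : V, ∃ g : A × B, ρ g v ∈ U) → U = ⊤ := by
  haveI : Fact p.Prime := ⟨hp⟩
  intro n
  induction n with
  | zero =>
    intro V _ _ _ ρ U hrk _
    haveI : Subsingleton V := finrank_zero_iff.mp (Nat.le_zero.mp hrk)
    exact Submodule.eq_top_iff'.mpr fun x => (Subsingleton.elim x 0) ▸ U.zero_mem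
  | succ n ih =>
    intro V _ _ _ ρ U hrk hcov
    by_cases hdim : finrank F V = 0
    · haveI : Subsingleton V := finrank_zero_iff.mp hdim
      exact Submodule.eq_top_iff'.mpr fun x => (Subsingleton.elim x 0) ▸ U.zero_mem
    -- set up the B-action on V
    letI : SMul B V := ⟨fun b v => ρ (1, b) v⟩
    letI : MulAction B V :=
      { one_smul := fun v => by
          show ρ ((1 : A), (1 : B)) v = v
          rw [show ((1 : A), (1 : B)) = (1 : A × B) from rfl, map_one]; rfl
        mul_smul := fun b b' v => by
          show ρ ((1 : A), b * b') v = ρ (1, b) (ρ (1, b') v)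
          rw [show ((1 : A), b * b') = ((1 : A), b) * ((1 : A), b') by simp, map_mul]; rfl }
    haveI : Finite V := Module.finite_of_finite F
    letI : Fintype V := Fintype.ofFinite V
    have hpV : p ∣ Nat.card V := by
      rw [Nat.card_eq_fintype_card, card_eq_pow_finrank (K := F) (V := V)]
      obtain ⟨k, hpk, hcard⟩ := FiniteField.card F p
      exact dvd_pow (hcard ▸ dvd_pow_self p k.pos.ne') hdim
    have h0fix : (0 : V) ∈ MulAction.fixedPoints B V := by
      intro b
      show ρ (1, b) 0 = 0
      exact map_zero _
    obtain ⟨w₀, hw₀fix, hw₀ne⟩ :=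
      hB.exists_fixed_point_of_prime_dvd_card_of_fixed_point V hpV h0fix
    -- the subspace of B-fixed points
    let W : Submodule F V :=
      { carrier := {v | ∀ b : B, ρ (1, b) v = v}
        add_mem' := fun {x y} hx hy b => by rw [map_add, hx b, hy b]
        zero_mem' := fun b => map_zero _
        smul_mem' := fun c x hx b => by rw [map_smul, hx b] }
    have hw₀W : w₀ ∈ W := fun b => hw₀fix b
    have hWbot : W ≠ ⊥ := by
      intro h
      rw [h] at hw₀W
      exact hw₀ne ((by simpa using hw₀W) : w₀ = 0).symm
    -- the A-representation
    set σ : Representation F A V := ρ.comp (MonoidHom.inl A B) with hσ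
    have hσa : ∀ a : A, σ a = ρ (a, 1) := fun a => rfl
    have hWinv : ∀ a : A, ∀ w ∈ W, σ a w ∈ W := by
      intro a w hw b
      rw [hσa]
      rw [← Module.End.mul_apply, ← map_mul, show ((1 : A), b) * (a, 1) = (a, b) by simp,
        show ((a : A), b) = (a, 1) * (1, b) by simp, map_mul, Module.End.mul_apply, hw b]
    obtain ⟨w, hwW, hw0, heig⟩ := aux_eig hA σ (finrank F W) W le_rfl hWbot hWinv
    -- the invariant line
    set L : Submodule F V := Submodule.span F {w} with hL
    have hρw : ∀ g : A × B, ∃ c : F, ρ g w = c • w := by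
      rintro ⟨a, b⟩
      obtain ⟨c, hc⟩ := heig a
      refine ⟨c, ?_⟩
      rw [show ((a : A), b) = (a, 1) * (1, b) by simp, map_mul, Module.End.mul_apply, hwW b,
        ← hσa, hc]
    have hinvL : ∀ g : A × B, L ≤ L.comap (ρ g) := by
      intro g
      rw [hL, Submodule.span_le]
      intro x hx
      have hxw : x = w := hx
      subst hxw
      obtain ⟨c, hc⟩ := hρw g
      simpa [hc] using Submodule.smul_mem _ c (Submodule.mem_span_singleton_self x)
    -- w ∈ U
    have hwU : w ∈ U := by
      obtain ⟨g, hg⟩ := hcov w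
      obtain ⟨c, hc⟩ := hρw g
      have hc0 : c ≠ 0 := by
        rintro rfl
        have : ρ g⁻¹ (ρ g w) = w := by
          rw [← Module.End.mul_apply, ← map_mul, inv_mul_cancel, map_one]; rfl
        rw [hc, zero_smul, map_zero] at this
        exact hw0 this.symm
      have : c • w ∈ U := hc ▸ hg
      simpa [smul_smul, inv_mul_cancel₀ hc0] using U.smul_mem c⁻¹ this
    have hLU : L ≤ U := by
      rw [hL, Submodule.span_le, Set.singleton_subset_iff]
      exact hwU
    -- quotient representation
    let ρ' : Representation F (A × B) (V ⧸ L) :=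
      { toFun := fun g => Submodule.mapQ L L (ρ g) (hinvL g)
        map_one' := by
          apply Submodule.linearMap_qext
          ext x
          simp [Submodule.mapQ_apply]
        map_mul' := fun g h => by
          apply Submodule.linearMap_qext
          ext x
          simp [Submodule.mapQ_apply] }
    have hLrk : finrank F L = 1 := finrank_span_singleton hw0
    have hrkQ : finrank F (V ⧸ L) ≤ n := by
      have := Submodule.finrank_quotient_add_finrank L
      omega
    have hcov' : ∀ v : V ⧸ L, ∃ g : A × B, ρ' g v ∈ U.map L.mkQ := by
      intro v
      obtain ⟨x, rfl⟩ := Submodule.mkQ_surjective L v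
      obtain ⟨g, hg⟩ := hcov x
      refine ⟨g, ?_⟩
      show (Submodule.mapQ L L (ρ g) (hinvL g)) (L.mkQ x) ∈ U.map L.mkQ
      have hx : (Submodule.mapQ L L (ρ g) (hinvL g)) (L.mkQ x) = L.mkQ (ρ g x) := by
        simp [Submodule.mapQ_apply]
      rw [hx]
      exact Submodule.mem_map_of_mem hg
    have htop : U.map L.mkQ = ⊤ := ih (V ⧸ L) ρ' (U.map L.mkQ) hrkQ hcov'
    -- conclude
    rw [Submodule.eq_top_iff']
    intro v
    have hv : L.mkQ v ∈ U.map L.mkQ := htop ▸ Submodule.mem_top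
    obtain ⟨u, hu, huv⟩ := hv
    have hsub : u - v ∈ L := by
      rwa [show L.mkQ u = Submodule.Quotient.mk u from rfl,
        show L.mkQ v = Submodule.Quotient.mk v from rfl, Submodule.Quotient.eq] at huv
    have : u - (u - v) ∈ U := U.sub_mem hu (hLU hsub)
    simpa using this

end Main

/-- Let q be a power of the prime p, G = A × B with A abelian of exponent k dividing q − 1
and B a finite p-group, acting linearly on a finite-dimensional F_q-vector space V. If a
subspace U has ⋃_{g∈G} g(U) = V, then U = V. -/
theorem stmt_17 (p : ℕ) (hp : p.Prime) (F : Type*) [Field F] [Fintype F] [CharP F p]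
    (A B : Type*) [CommGroup A] [Group B] [Finite B] (hB : IsPGroup p B)
    (hA : Monoid.exponent A ∣ Fintype.card F - 1)
    (V : Type*) [AddCommGroup V] [Module F V] [FiniteDimensional F V]
    (ρ : Representation F (A × B) V)
    (U : Submodule F V) (hcov : ∀ v : V, ∃ g : A × B, ρ g v ∈ U) :
    U = ⊤ :=
  aux_main p hp F A B hB hA (Module.finrank F V) V ρ U le_rfl hcov
end
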